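/- Let d ≥ 7 be an integer. There exists an integer k ≥ 2 with cos²(π/k) = (1/6)(1 + 3/(d−4)) if and only if d = 10; moreover, when d = 10 the unique such k is k = 3, i.e. (1/6)(1 + 3/6) = 1/4 = cos²(π/3). (Hence the dihedral angle between the electric wall β¹+β²+β³ of a 3-form and the adjacent symmetry wall β⁴−β³, whose squared cosine is (1/6)(1+3/(d−4)), is an integer submultiple of π only in spacetime dimension D = d+1 = 11, where it equals π/3.) -/
import Mathlib

open Real

lemma cos_sq_pi_div_three : Real.cos (Real.pi / 3) ^ 2 = 1 / 4 := by
  rw [Real.cos_pi_div_three]; norm_num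

lemma cos_sq_ge_half (k : ℕ) (hk : 4 ≤ k) :
    (1 / 2 : ℝ) ≤ Real.cos (Real.pi / k) ^ 2 := by
  have hk0 : (0 : ℝ) < k := by positivity
  have h4 : (4 : ℝ) ≤ k := by exact_mod_cast hk
  have hle : Real.pi / k ≤ Real.pi / 4 :=
    div_le_div_of_nonneg_left Real.pi_pos.le (by norm_num) h4
  have hge : Real.cos (Real.pi / 4) ≤ Real.cos (Real.pi / k) := by
    apply Real.cos_le_cos_of_nonneg_of_le_pi
    · positivity
    · calc Real.pi / 4 ≤ Real.pi / 1 := by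
            apply div_le_div_of_nonneg_left Real.pi_pos.le <;> norm_num
        _ = Real.pi := by ring
    · exact hle
  have h0 : (0 : ℝ) ≤ Real.cos (Real.pi / 4) := by
    rw [Real.cos_pi_div_four]; positivity
  calc (1/2 : ℝ) = Real.cos (Real.pi / 4) ^ 2 := by
        rw [Real.cos_pi_div_four]
        rw [div_pow, sq_sqrt (by norm_num : (2:ℝ) ≥ 0)]; norm_num
    _ ≤ Real.cos (Real.pi / k) ^ 2 := by
        apply pow_le_pow_left₀ h0 hge

lemma unique_k (k : ℕ) (hk : 2 ≤ k) :
    Real.cos (Real.pi / k) ^ 2 = (1 / 6) * (1 + 3 / ((10 : ℝ) - 4)) ↔ k = 3 := by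
  have hval : (1 / 6 : ℝ) * (1 + 3 / ((10 : ℝ) - 4)) = 1 / 4 := by norm_num
  rw [hval]
  constructor
  · intro h
    rcases lt_or_ge k 4 with h4 | h4
    · interval_cases k
      · exfalso
        rw [show ((2:ℕ):ℝ) = 2 by norm_num, Real.cos_pi_div_two] at h
        norm_num at h
      · rfl
    · exfalso
      have := cos_sq_ge_half k h4
      rw [h] at this
      norm_num at this
  · rintro rfl
    push_cast
    exact cos_sq_pi_div_three

theorem angle_submultiple_iff_d_ten (d : ℕ) (hd : 7 ≤ d) :
    ((∃ k : ℕ, 2 ≤ k ∧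
        Real.cos (Real.pi / k) ^ 2 = (1 / 6) * (1 + 3 / ((d : ℝ) - 4))) ↔ d = 10) ∧
    (∀ k : ℕ, 2 ≤ k →
      (Real.cos (Real.pi / k) ^ 2 = (1 / 6) * (1 + 3 / ((10 : ℝ) - 4)) ↔ k = 3)) ∧
    (1 / 6 : ℝ) * (1 + 3 / 6) = 1 / 4 ∧
    Real.cos (Real.pi / 3) ^ 2 = 1 / 4 := by
  have hd7 : (7 : ℝ) ≤ (d : ℝ) := by exact_mod_cast hd
  have hd4 : (3 : ℝ) ≤ (d : ℝ) - 4 := by linarith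
  have hd4pos : (0 : ℝ) < (d : ℝ) - 4 := by linarith
  refine ⟨?_, unique_k, by norm_num, cos_sq_pi_div_three⟩
  constructor
  · rintro ⟨k, hk, h⟩
    have hub : (1 / 6 : ℝ) * (1 + 3 / ((d : ℝ) - 4)) ≤ 1 / 3 := by
      have : 3 / ((d : ℝ) - 4) ≤ 1 := by
        rw [div_le_one hd4pos]; linarith
      linarith
    have hlb : (0 : ℝ) < (1 / 6 : ℝ) * (1 + 3 / ((d : ℝ) - 4)) := by positivity
    -- k must be 3
    have hk3 : k = 3 := by
      rcases lt_or_ge k 4 with h4 | h4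
      · interval_cases k
        · exfalso
          rw [show ((2:ℕ):ℝ) = 2 by norm_num] at h
          rw [Real.cos_pi_div_two] at h
          norm_num at h
          linarith
        · rfl
      · exfalso
        have := cos_sq_ge_half k h4
        rw [h] at this
        linarith
    subst hk3
    have : (1 / 4 : ℝ) = (1 / 6) * (1 + 3 / ((d : ℝ) - 4)) := by
      rw [← h]; push_cast; exact cos_sq_pi_div_three.symm
    have hdeq : (d : ℝ) = 10 := by
      field_simp at this
      linarith
    exact_mod_cast hdeq
  · rintro rfl
    exact ⟨3, by norm_num, by rw [(unique_k 3 (by norm_num)).mpr rfl]; push_cast; norm_num⟩
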